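/- arXiv:2403.08805 — 4 statements merged into one kernel-verified Lean document; each statement's English description precedes it below -/
import Mathlib

section
/- The Shannon entropy of the Poisson distribution, H_S(λ) = -∑_{k=0}^∞ (λ^k e^{-λ}/k!) · log(λ^k e^{-λ}/k!), is a strictly concave function of λ on (0, +∞). -/
/-!
With `p_k = λ^k e^{-λ}/k!` we have `log p_k = k log λ - λ - log k!` and `∑ k p_k = λ`, so
`H(λ) = λ - λ log λ + E_λ[log N!]` for `N ∼ Poisson(λ)`. Differentiating
`E_λ[c(N)] = e^{-λ} ∑ c_k λ^k/k!` termwise gives `E_λ[(Δc)(N)]`, `Δ` the forward difference; hence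
`H'(λ) = -log λ + E_λ[log(N+1)]` and `H''(λ) = -1/λ + E_λ[log(N+2) - log(N+1)]`. Finally
`log(k+2) - log(k+1) ≤ 1/(k+1)` and `E_λ[1/(N+1)] = (1 - e^{-λ})/λ < 1/λ`, so `H'' < 0`.
-/

open Real Set Filter
open scoped Nat fwdDiff

theorem strictConcaveOn_of_hasDerivAt2_neg {D : Set ℝ} (hD : Convex ℝ D) (hDo : IsOpen D)
    {f f' f'' : ℝ → ℝ} (hf : ∀ x ∈ D, HasDerivAt f (f' x) x)
    (hf' : ∀ x ∈ D, HasDerivAt f' (f'' x) x) (hf'' : ∀ x ∈ D, f'' x < 0) :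
    StrictConcaveOn ℝ D f := by
  have hanti : StrictAntiOn f' D :=
    strictAntiOn_of_hasDerivWithinAt_neg hD
      (fun x hx => (hf' x hx).continuousAt.continuousWithinAt)
      (fun x hx => (hf' x (interior_subset hx)).hasDerivWithinAt)
      (fun x hx => hf'' x (interior_subset hx))
  refine StrictAntiOn.strictConcaveOn_of_deriv hD
    (fun x hx => (hf x hx).continuousAt.continuousWithinAt) ?_
  rw [hDo.interior_eq]
  exact hanti.congr fun x hx => (hf x hx).deriv.symm

theorem hasDerivAt_pow_succ_div_factorial_succ (k : ℕ) (x : ℝ) :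
    HasDerivAt (fun y : ℝ => y ^ (k + 1) / (k + 1)!) (x ^ k / k !) x := by
  refine ((hasDerivAt_pow (k + 1) x).div_const _).congr_deriv ?_
  rw [Nat.factorial_succ]
  push_cast
  field_simp

theorem hasSum_pow_div_factorial (x : ℝ) : HasSum (fun k => x ^ k / k !) (exp x) := by
  rw [exp_eq_exp_ℝ]
  exact NormedSpace.expSeries_div_hasSum_exp x

theorem hasSum_pow_succ_div_factorial_succ (x : ℝ) :
    HasSum (fun k => x ^ (k + 1) / (k + 1)!) (exp x - 1) := by
  simpa using (hasSum_nat_add_iff' 1).2 (hasSum_pow_div_factorial x)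

theorem hasSum_natCast_mul_pow_div_factorial (x : ℝ) :
    HasSum (fun k : ℕ => (k : ℝ) * x ^ k / k !) (x * exp x) := by
  have hterm (k : ℕ) : ((k + 1 : ℕ) : ℝ) * x ^ (k + 1) / (k + 1)! = x * (x ^ k / k !) := by
    rw [Nat.factorial_succ]
    push_cast
    field_simp
    ring
  have h : HasSum (fun k : ℕ => ((k + 1 : ℕ) : ℝ) * x ^ (k + 1) / (k + 1)!) (x * exp x) := by
    simpa only [hterm] using (hasSum_pow_div_factorial x).mul_left x
  simpa using (hasSum_nat_add_iff (f := fun k : ℕ => (k : ℝ) * x ^ k / k !) 1).1 h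

noncomputable def egf (c : ℕ → ℝ) (x : ℝ) : ℝ := ∑' k, c k * x ^ k / k !

def IsGeomBounded (c : ℕ → ℝ) : Prop := ∃ C R : ℝ, 0 ≤ R ∧ ∀ k, |c k| ≤ C * R ^ k

namespace IsGeomBounded

variable {c d : ℕ → ℝ}

theorem comp_succ (hc : IsGeomBounded c) : IsGeomBounded fun k => c (k + 1) := by
  obtain ⟨C, R, hR, hc⟩ := hc
  exact ⟨C * R, R, hR, fun k => by simpa only [pow_succ', mul_assoc] using hc (k + 1)⟩

theorem sub (hc : IsGeomBounded c) (hd : IsGeomBounded d) : IsGeomBounded fun k => c k - d k := by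
  obtain ⟨C, R, hR, hc⟩ := hc
  obtain ⟨D, S, hS, hd⟩ := hd
  have hC : 0 ≤ C := by simpa using (abs_nonneg _).trans (hc 0)
  have hD : 0 ≤ D := by simpa using (abs_nonneg _).trans (hd 0)
  refine ⟨C + D, max R S, hR.trans (le_max_left R S), fun k => ?_⟩
  calc |c k - d k| ≤ |c k| + |d k| := abs_sub _ _
    _ ≤ C * R ^ k + D * S ^ k := add_le_add (hc k) (hd k)
    _ ≤ C * max R S ^ k + D * max R S ^ k := by gcongr <;> simp
    _ = (C + D) * max R S ^ k := by ring

theorem fwdDiff (hc : IsGeomBounded c) : IsGeomBounded (Δ_[1] c) :=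
  hc.comp_succ.sub hc

end IsGeomBounded

theorem norm_mul_pow_div_factorial_le {c : ℕ → ℝ} {C R : ℝ}
    (hc : ∀ k, |c k| ≤ C * R ^ k) {x r : ℝ} (hx : |x| ≤ r) (k : ℕ) :
    ‖c k * x ^ k / (k ! : ℝ)‖ ≤ C * ((R * r) ^ k / k !) := by
  rw [Real.norm_eq_abs, abs_div, abs_mul, abs_pow, Nat.abs_cast, mul_pow, ← mul_div_assoc,
    ← mul_assoc]
  have hCR : 0 ≤ C * R ^ k := (abs_nonneg _).trans (hc k)
  gcongr
  exact hc k

section egf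

variable {c d : ℕ → ℝ}

theorem summable_egf (hc : IsGeomBounded c) (x : ℝ) : Summable fun k => c k * x ^ k / k ! := by
  obtain ⟨C, R, -, hc⟩ := hc
  exact .of_norm_bounded ((summable_pow_div_factorial _).mul_left C)
    (norm_mul_pow_div_factorial_le hc le_rfl)

theorem egf_sub (hc : IsGeomBounded c) (hd : IsGeomBounded d) (x : ℝ) :
    egf (fun k => c k - d k) x = egf c x - egf d x := by
  rw [egf, egf, egf, ← (summable_egf hc x).tsum_sub (summable_egf hd x)]
  simp only [sub_mul, sub_div]

theorem hasDerivAt_egf (hc : IsGeomBounded c) (x : ℝ) :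
    HasDerivAt (egf c) (egf (fun k => c (k + 1)) x) x := by
  have hshift : egf c = fun y => c 0 + ∑' k, c (k + 1) * (y ^ (k + 1) / (k + 1)!) := by
    ext y
    rw [egf, (summable_egf hc y).tsum_eq_zero_add]
    simp [mul_div_assoc]
  obtain ⟨C, R, -, hc'⟩ := hc.comp_succ
  rw [hshift]
  refine HasDerivAt.const_add _ ?_
  have hx : x ∈ Ioo (-(|x| + 1)) (|x| + 1) := abs_lt.1 (lt_add_one _)
  have key := hasDerivAt_tsum_of_isPreconnected
    ((summable_pow_div_factorial _).mul_left C) isOpen_Ioo (convex_Ioo _ _).isPreconnected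
    (fun k y _ => (hasDerivAt_pow_succ_div_factorial_succ k y).const_mul (c (k + 1)))
    (fun k y hy => by simpa only [mul_div_assoc] using
      norm_mul_pow_div_factorial_le hc' (abs_lt.2 hy).le k) hx
    (by simpa only [mul_div_assoc] using (summable_nat_add_iff 1).2 (summable_egf hc x)) hx
  simpa only [egf, mul_div_assoc] using key

theorem hasDerivAt_exp_neg_mul_egf (hc : IsGeomBounded c) (x : ℝ) :
    HasDerivAt (fun y => exp (-y) * egf c y) (exp (-x) * egf (Δ_[1] c) x) x := by
  refine (((hasDerivAt_neg x).exp).mul (hasDerivAt_egf hc x)).congr_deriv ?_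
  rw [show egf (Δ_[1] c) x = egf (fun k => c (k + 1) - c k) x from rfl, egf_sub hc.comp_succ hc]
  ring

end egf

noncomputable def poissonEntropy (l : ℝ) : ℝ :=
  -∑' k : ℕ, (l ^ k * exp (-l) / k !) * log (l ^ k * exp (-l) / k !)

theorem isGeomBounded_log_factorial : IsGeomBounded fun k => log k ! := by
  refine ⟨1, 4, by norm_num, fun k => ?_⟩
  have hk : (k : ℝ) ≤ 2 ^ k := by exact_mod_cast Nat.lt_two_pow_self.le
  rw [abs_of_nonneg (log_nonneg (Nat.one_le_cast.2 k.factorial_pos))]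
  calc log k ! ≤ log ((k : ℝ) ^ k) :=
        log_le_log (by positivity) (by exact_mod_cast k.factorial_le_pow)
    _ = k * log k := log_pow k k
    _ ≤ k * k := by gcongr; exact log_le_self k.cast_nonneg
    _ ≤ 2 ^ k * 2 ^ k := by gcongr
    _ = 1 * 4 ^ k := by rw [one_mul, ← mul_pow]; norm_num

theorem isGeomBounded_log_succ : IsGeomBounded fun k : ℕ => log (k + 1) := by
  refine ⟨1, 2, by norm_num, fun k => ?_⟩
  have hk : (k : ℝ) ≤ 2 ^ k := by exact_mod_cast Nat.lt_two_pow_self.le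
  rw [abs_of_nonneg (log_nonneg (by simp)), one_mul]
  linarith [log_le_sub_one_of_pos (x := k + 1) (by positivity)]

theorem fwdDiff_log_factorial : Δ_[1] (fun k => log k !) = fun k : ℕ => log (k + 1) := by
  funext k
  rw [fwdDiff, Nat.factorial_succ, Nat.cast_mul, log_mul (by positivity) (by positivity)]
  push_cast
  ring

theorem fwdDiff_log_succ_le (k : ℕ) : Δ_[1] (fun k : ℕ => log (k + 1)) k ≤ ((k : ℝ) + 1)⁻¹ := by
  have h := log_le_sub_one_of_pos (x := ((k : ℝ) + 2) / (k + 1)) (by positivity)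
  rw [log_div (by positivity) (by positivity)] at h
  calc Δ_[1] (fun k : ℕ => log (k + 1)) k = log ((k : ℝ) + 2) - log (k + 1) := by
        simp only [fwdDiff]
        push_cast
        ring_nf
    _ ≤ (k + 2) / (k + 1) - 1 := h
    _ = ((k : ℝ) + 1)⁻¹ := by field_simp; ring

theorem poissonEntropy_eq {l : ℝ} (hl : 0 < l) :
    poissonEntropy l = l - l * log l + exp (-l) * egf (fun k => log k !) l := by
  have hterm (k : ℕ) : (l ^ k * exp (-l) / k !) * log (l ^ k * exp (-l) / k !) =
      exp (-l) * (log l * (k * l ^ k / k !) - l * (l ^ k / k !) - log k ! * l ^ k / k !) := by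
    rw [log_div (by positivity) (by positivity), log_mul (by positivity) (by positivity), log_pow,
      log_exp]
    ring
  have hsum := ((((hasSum_natCast_mul_pow_div_factorial l).mul_left (log l)).sub
    ((hasSum_pow_div_factorial l).mul_left l)).sub
    (summable_egf isGeomBounded_log_factorial l).hasSum).mul_left (exp (-l))
  rw [poissonEntropy, tsum_congr hterm, hsum.tsum_eq, egf, exp_neg]
  field_simp
  ring

theorem hasDerivAt_poissonEntropy {l : ℝ} (hl : 0 < l) :
    HasDerivAt poissonEntropy (-log l + exp (-l) * egf (fun k : ℕ => log (k + 1)) l) l := by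
  have h := ((hasDerivAt_id' l).sub ((hasDerivAt_id' l).mul (hasDerivAt_log hl.ne'))).add
    (hasDerivAt_exp_neg_mul_egf isGeomBounded_log_factorial l)
  rw [fwdDiff_log_factorial] at h
  refine (h.congr_deriv ?_).congr_of_eventuallyEq
    (eventually_of_mem (Ioi_mem_nhds hl) fun y hy => poissonEntropy_eq hy)
  field_simp
  ring

theorem mul_egf_fwdDiff_log_succ_le {x : ℝ} (hx : 0 ≤ x) :
    x * egf (Δ_[1] fun k : ℕ => log (k + 1)) x ≤ exp x - 1 := by
  rw [egf, ← tsum_mul_left]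
  refine hasSum_le (fun k => ?_)
    ((summable_egf isGeomBounded_log_succ.fwdDiff x).mul_left x).hasSum
    (hasSum_pow_succ_div_factorial_succ x)
  calc x * (Δ_[1] (fun k : ℕ => log (k + 1)) k * x ^ k / k !)
      ≤ x * (((k : ℝ) + 1)⁻¹ * x ^ k / k !) := by gcongr; exact fwdDiff_log_succ_le k
    _ = x ^ (k + 1) / (k + 1)! := by
        rw [Nat.factorial_succ]
        push_cast
        field_simp
        ring

theorem exp_neg_mul_egf_fwdDiff_log_succ_lt_inv {l : ℝ} (hl : 0 < l) :
    exp (-l) * egf (Δ_[1] fun k : ℕ => log (k + 1)) l < l⁻¹ := by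
  rw [← one_div, lt_div_iff₀' hl]
  calc l * (exp (-l) * egf (Δ_[1] fun k : ℕ => log (k + 1)) l)
      = exp (-l) * (l * egf (Δ_[1] fun k : ℕ => log (k + 1)) l) := by ring
    _ ≤ exp (-l) * (exp l - 1) := by gcongr; exact mul_egf_fwdDiff_log_succ_le hl.le
    _ = 1 - exp (-l) := by rw [mul_sub, ← exp_add]; simp
    _ < 1 := by linarith [exp_pos (-l)]

/-- The Shannon entropy of the Poisson distribution,
`H_S(λ) = -∑_{k=0}^∞ (λ^k e^{-λ}/k!) · log(λ^k e^{-λ}/k!)`,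
is strictly concave in the intensity `λ` on `(0, ∞)`. -/
theorem shannon_entropy_poisson_strictConcaveOn :
    StrictConcaveOn ℝ (Set.Ioi (0 : ℝ)) (fun l : ℝ =>
      -∑' k : ℕ, (l ^ k * Real.exp (-l) / (Nat.factorial k : ℝ)) *
        Real.log (l ^ k * Real.exp (-l) / (Nat.factorial k : ℝ))) := by
  change StrictConcaveOn ℝ (Ioi 0) poissonEntropy
  refine strictConcaveOn_of_hasDerivAt2_neg (convex_Ioi 0) isOpen_Ioi
    (fun l hl => hasDerivAt_poissonEntropy hl)
    (fun l hl => (hasDerivAt_log hl.ne').neg.add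
      (hasDerivAt_exp_neg_mul_egf isGeomBounded_log_succ l))
    (fun l hl => ?_)
  linarith [exp_neg_mul_egf_fwdDiff_log_succ_lt_inv hl]
end

section
/- For every λ > 0, the Shannon entropy H_S of the Poisson distribution is differentiable at λ and its derivative equals H_S'(λ) = -log λ + e^{-λ} · ∑_{k=1}^∞ λ^k · log(k+1) / k!. -/
/-!
Since `log p_k = k log λ - λ - log k!`, `∑ p_k = 1` and `∑ k p_k = λ`, the entropy is
`λ - λ log λ + e^{-λ} S(λ)` with `S(λ) = ∑ λ^k log k! / k!`. As `log k! ≤ 4^k`, the series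
`S` is an entire exponential generating function; termwise differentiation shifts its
coefficients, so
`(e^{-λ} S)' = e^{-λ} ∑ λ^k (log (k+1)! - log k!) / k! = e^{-λ} ∑ λ^k log (k+1) / k!`.
-/

open Real
open scoped Nat

noncomputable def expGenFun (a : ℕ → ℝ) (x : ℝ) : ℝ := ∑' k, x ^ k * a k / k !

section

variable {a : ℕ → ℝ} {C B : ℝ}

lemma summable_expGenFun (h : ∀ k, |a k| ≤ C * B ^ k) (x : ℝ) :
    Summable fun k => x ^ k * a k / k ! := by
  refine .of_norm_bounded ((summable_pow_div_factorial (B * |x|)).mul_left C) fun k => ?_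
  rw [norm_div, norm_mul, norm_pow, Real.norm_eq_abs, Real.norm_eq_abs, RCLike.norm_natCast]
  calc |x| ^ k * |a k| / k ! ≤ |x| ^ k * (C * B ^ k) / k ! := by gcongr; exact h k
    _ = C * ((B * |x|) ^ k / k !) := by ring

lemma hasDerivAt_expGenFun (h : ∀ k, |a k| ≤ C * B ^ k) (x : ℝ) :
    HasDerivAt (expGenFun a) (expGenFun (fun k => a (k + 1)) x) x := by
  have hshift : expGenFun a = fun y => a 0 + ∑' k, y ^ (k + 1) * a (k + 1) / (k + 1)! := by
    funext y
    rw [expGenFun, (summable_expGenFun h y).tsum_eq_zero_add]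
    simp
  have hsucc : ∀ k, |(|a (k + 1)|)| ≤ C * B * B ^ k := fun k => by
    rw [abs_abs]; exact (h (k + 1)).trans_eq (by ring)
  obtain ⟨R, hxR⟩ : ∃ R, |x| < R := ⟨|x| + 1, lt_add_one _⟩
  rw [hshift]
  -- the constant term is split off so that the differentiated terms need no reindexing
  refine (hasDerivAt_tsum_of_isPreconnected (t := Metric.ball 0 R)
    (u := fun k => R ^ k * |a (k + 1)| / k !) (g' := fun k y => y ^ k * a (k + 1) / k !)
    (summable_expGenFun hsucc R) Metric.isOpen_ball (convex_ball 0 R).isPreconnected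
    (fun k y _ => ?_) (fun k y hy => ?_) (y₀ := x) ?_ ((summable_nat_add_iff 1).mpr
    (summable_expGenFun h x)) ?_).const_add (a 0)
  · refine (((hasDerivAt_pow (k + 1) y).mul_const (a (k + 1))).div_const
      ((k + 1)! : ℝ)).congr_deriv ?_
    rw [Nat.factorial_succ]; push_cast; field_simp
  · have hyR : |y| ≤ R := by simpa using (Metric.mem_ball.mp hy).le
    rw [norm_div, norm_mul, norm_pow, Real.norm_eq_abs, Real.norm_eq_abs, RCLike.norm_natCast]
    gcongr
  all_goals simpa using hxR

lemma hasDerivAt_exp_neg_mul_expGenFun (h : ∀ k, |a k| ≤ C * B ^ k) (x : ℝ) :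
    HasDerivAt (fun y => exp (-y) * expGenFun a y)
      (exp (-x) * expGenFun (fun k => a (k + 1) - a k) x) x := by
  have hsucc : ∀ k, |a (k + 1)| ≤ C * B * B ^ k := fun k => (h (k + 1)).trans_eq (by ring)
  refine ((hasDerivAt_neg x).exp.mul (hasDerivAt_expGenFun h x)).congr_deriv ?_
  simp only [expGenFun, mul_sub, sub_div,
    (summable_expGenFun hsucc x).tsum_sub (summable_expGenFun h x)]
  ring

end

lemma tsum_pow_div_factorial (x : ℝ) : ∑' k : ℕ, x ^ k / k ! = exp x := by
  rw [exp_eq_exp_ℝ, NormedSpace.exp_eq_tsum_div]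

lemma summable_expGenFun_natCast (x : ℝ) : Summable fun k : ℕ => x ^ k * (k : ℝ) / k ! :=
  summable_expGenFun (C := 1) (B := 2)
    (fun k => by rw [Nat.abs_cast, one_mul]; exact_mod_cast Nat.lt_two_pow_self.le) x

lemma expGenFun_natCast (x : ℝ) : expGenFun (fun k => k) x = x * exp x := by
  rw [expGenFun, (summable_expGenFun_natCast x).tsum_eq_zero_add,
    ← tsum_pow_div_factorial, ← tsum_mul_left]
  simp only [Nat.cast_zero, mul_zero, zero_div, zero_add]
  refine tsum_congr fun k => ?_
  rw [Nat.factorial_succ]; push_cast; field_simp; ring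

lemma abs_log_factorial_le (k : ℕ) : |log k !| ≤ 4 ^ k := by
  have hk : (k : ℝ) ≤ 2 ^ k := by exact_mod_cast Nat.lt_two_pow_self.le
  rw [abs_of_nonneg (log_natCast_nonneg _)]
  calc log k ! ≤ log ((k : ℝ) ^ k) :=
        log_le_log (by positivity) (by exact_mod_cast Nat.factorial_le_pow k)
    _ = k * log k := log_pow k k
    _ ≤ k * k := by gcongr; exact log_le_self k.cast_nonneg
    _ ≤ 2 ^ k * 2 ^ k := by gcongr
    _ = 4 ^ k := by rw [← mul_pow]; norm_num

lemma neg_tsum_poisson_mul_log_eq {x : ℝ} (hx : 0 < x) :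
    -∑' k : ℕ, (x ^ k * exp (-x) / k !) * log (x ^ k * exp (-x) / k !) =
      x - x * log x + exp (-x) * expGenFun (fun k => log k !) x := by
  have hterm : ∀ k : ℕ, (x ^ k * exp (-x) / k !) * log (x ^ k * exp (-x) / k !) =
      exp (-x) * (log x * (x ^ k * k / k !) - x * (x ^ k / k !) - x ^ k * log k ! / k !) := by
    intro k
    rw [log_div (by positivity) (by positivity), log_mul (by positivity) (exp_ne_zero _),
      log_pow, log_exp]
    ring
  have hlog := summable_expGenFun (C := 1)
    (fun k => (abs_log_factorial_le k).trans_eq (one_mul _).symm) x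
  have hmean := (summable_expGenFun_natCast x).mul_left (log x)
  have hone := (summable_pow_div_factorial x).mul_left x
  rw [tsum_congr hterm, tsum_mul_left, (hmean.sub hone).tsum_sub hlog, hmean.tsum_sub hone,
    tsum_mul_left, tsum_mul_left]
  have hexp : exp (-x) * exp x = 1 := by rw [← exp_add, neg_add_cancel, exp_zero]
  rw [expGenFun, show ∑' k : ℕ, x ^ k * (k : ℝ) / k ! = x * exp x from expGenFun_natCast x,
    tsum_pow_div_factorial]
  linear_combination (x - x * log x) * hexp

/-- For every `λ > 0` the Shannon entropy of the Poisson distribution is differentiable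
at `λ` with derivative `H_S'(λ) = -log λ + e^{-λ} · ∑_{k=1}^∞ λ^k log(k+1)/k!`
(the `k = 0` term of the series vanishes since `log 1 = 0`, so the sum over all `k ∈ ℕ`
equals the sum from `k = 1`). -/
theorem shannon_entropy_poisson_hasDerivAt (l : ℝ) (hl : 0 < l) :
    HasDerivAt (fun x : ℝ =>
      -∑' k : ℕ, (x ^ k * Real.exp (-x) / (Nat.factorial k : ℝ)) *
        Real.log (x ^ k * Real.exp (-x) / (Nat.factorial k : ℝ)))
      (-Real.log l +
        Real.exp (-l) * ∑' k : ℕ, l ^ k * Real.log ((k : ℝ) + 1) / (Nat.factorial k : ℝ))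
      l := by
  have hS := hasDerivAt_exp_neg_mul_expGenFun (C := 1)
    (fun k => (abs_log_factorial_le k).trans_eq (one_mul _).symm) l
  have hH := ((hasDerivAt_id l).sub (hasDerivAt_mul_log hl.ne')).add hS
  have hcoeff : expGenFun (fun k => log (k + 1)! - log k !) l =
      ∑' k : ℕ, l ^ k * log ((k : ℝ) + 1) / k ! := tsum_congr fun k => by
    beta_reduce
    rw [Nat.factorial_succ, Nat.cast_mul, log_mul (by positivity) (by positivity)]
    push_cast; ring
  refine (hH.congr_of_eventuallyEq ?_).congr_deriv ?_
  · filter_upwards [Ioi_mem_nhds hl] with x hx using neg_tsum_poisson_mul_log_eq hx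
  · rw [hcoeff]; ring
end

section
/- For every fixed n ≥ 0, the function S_n(λ) = sup_{m ≥ 0} ∑_{k=m}^{m+n} λ^k e^{-λ}/k! is strictly decreasing in λ on (0, +∞); that is, for all 0 < λ₁ < λ₂ one has sup_{m ≥ 0} ∑_{k=m}^{m+n} λ₁^k e^{-λ₁}/k! > sup_{m ≥ 0} ∑_{k=m}^{m+n} λ₂^k e^{-λ₂}/k!. (This supremum equals the sum of the n+1 largest terms of the Poisson probability sequence {p_k(λ) : k ≥ 0} rearranged in non-increasing order.) -/
/-!
Poisson laws convolve: `p_k(a + b) = ∑_{i + j = k} p_i(a) p_j(b)`. Hence each block sum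
`s_n(m, a + b)` is a combination of blocks of length at most `n + 1` for intensity `a`, each at
most `S_n(a)`, with weights `p_j(b)`, `j ≤ m + n`, of total mass `< 1`; so
`s_n(m, a + b) < S_n(a)` for every `m`. Since `s_n(m, λ) → 0` as `m → ∞`, the supremum
`S_n(a + b)` is attained, and the strict inequality passes to it.
-/

open Finset Filter Topology Real
open scoped Nat

theorem exists_forall_le_of_tendsto_lt {α : Type*} [LinearOrder α] [TopologicalSpace α]
    [ClosedIciTopology α] {f : ℕ → α} {c : α} (hf : Tendsto f atTop (𝓝 c)) {m₀ : ℕ}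
    (hm₀ : c < f m₀) : ∃ m, ∀ k, f k ≤ f m := by
  obtain ⟨N, hN⟩ := eventually_atTop.1 (hf.eventually_lt_const hm₀)
  have hm₀N : m₀ < N := by
    by_contra! h
    exact lt_irrefl _ (hN m₀ h)
  obtain ⟨m, -, hm⟩ := (range N).exists_max_image f ⟨m₀, mem_range.2 hm₀N⟩
  refine ⟨m, fun k => ?_⟩
  rcases lt_or_ge k N with hk | hk
  · exact hm k (mem_range.2 hk)
  · exact (hN k hk).le.trans (hm m₀ (mem_range.2 hm₀N))

noncomputable def poissonProb (l : ℝ) (k : ℕ) : ℝ := l ^ k * exp (-l) / k !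

noncomputable def poissonBlockSum (n : ℕ) (l : ℝ) (m : ℕ) : ℝ :=
  ∑ k ∈ Icc m (m + n), poissonProb l k

noncomputable def poissonBlockSup (n : ℕ) (l : ℝ) : ℝ := ⨆ m : ℕ, poissonBlockSum n l m

section PoissonProb

variable {l : ℝ}

theorem poissonProb_nonneg (hl : 0 ≤ l) (k : ℕ) : 0 ≤ poissonProb l k := by
  unfold poissonProb
  positivity

theorem poissonProb_pos (hl : 0 < l) (k : ℕ) : 0 < poissonProb l k := by
  unfold poissonProb
  positivity

theorem tendsto_poissonProb_atTop (l : ℝ) : Tendsto (poissonProb l) atTop (𝓝 0) := by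
  have h := (FloorSemiring.tendsto_pow_div_factorial_atTop l).mul_const (exp (-l))
  rw [zero_mul] at h
  exact h.congr fun k => div_mul_eq_mul_div _ _ _

theorem sum_range_poissonProb_lt_one (hl : 0 < l) (N : ℕ) :
    ∑ k ∈ range N, poissonProb l k < 1 := by
  have hpartial : ∑ k ∈ range N, l ^ k / k ! < exp l := by
    calc ∑ k ∈ range N, l ^ k / k !
        < ∑ k ∈ range (N + 1), l ^ k / k ! := by
          rw [sum_range_succ]
          exact lt_add_of_pos_right _ (by positivity)
      _ ≤ exp l := sum_le_exp_of_nonneg hl.le _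
  calc ∑ k ∈ range N, poissonProb l k
      = (∑ k ∈ range N, l ^ k / k !) * exp (-l) := by
        rw [sum_mul]
        exact sum_congr rfl fun k _ => by unfold poissonProb; ring
    _ < exp l * exp (-l) := mul_lt_mul_of_pos_right hpartial (exp_pos _)
    _ = 1 := by rw [← exp_add, add_neg_cancel, exp_zero]

theorem poissonProb_add (a b : ℝ) (k : ℕ) :
    poissonProb (a + b) k = ∑ j ∈ range (k + 1), poissonProb b j * poissonProb a (k - j) := by
  unfold poissonProb
  rw [add_comm a b, add_pow, sum_mul, sum_div]
  refine sum_congr rfl fun j hj => ?_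
  have hjk : j ≤ k := Nat.lt_succ_iff.1 (mem_range.1 hj)
  have hchoose : (k.choose j : ℝ) * j ! * (k - j)! = k ! := by
    exact_mod_cast Nat.choose_mul_factorial_mul_factorial hjk
  rw [neg_add, exp_add]
  field_simp
  linear_combination (b ^ j * a ^ (k - j)) * hchoose

end PoissonProb

section PoissonBlock

variable {n : ℕ} {l : ℝ}

theorem poissonBlockSum_eq_sum_range (n : ℕ) (l : ℝ) (m : ℕ) :
    poissonBlockSum n l m = ∑ i ∈ range (n + 1), poissonProb l (m + i) := by
  rw [poissonBlockSum, ← Ico_add_one_right_eq_Icc, sum_Ico_eq_sum_range, add_assoc, Nat.add_sub_cancel_left]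

theorem tendsto_poissonBlockSum_atTop (n : ℕ) (l : ℝ) :
    Tendsto (poissonBlockSum n l) atTop (𝓝 0) := by
  simp_rw [funext (poissonBlockSum_eq_sum_range n l)]
  simpa using tendsto_finsetSum (range (n + 1)) fun i _ =>
    (tendsto_poissonProb_atTop l).comp (tendsto_add_atTop_nat i)

theorem poissonBlockSum_pos (hl : 0 < l) (m : ℕ) : 0 < poissonBlockSum n l m :=
  sum_pos (fun k _ => poissonProb_pos hl k) (nonempty_Icc.2 (Nat.le_add_right m n))

theorem exists_forall_poissonBlockSum_le (n : ℕ) (hl : 0 < l) :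
    ∃ m, ∀ k, poissonBlockSum n l k ≤ poissonBlockSum n l m :=
  exists_forall_le_of_tendsto_lt (tendsto_poissonBlockSum_atTop n l) (poissonBlockSum_pos hl 0)

theorem bddAbove_range_poissonBlockSum (n : ℕ) (hl : 0 < l) :
    BddAbove (Set.range (poissonBlockSum n l)) :=
  let ⟨_, hm⟩ := exists_forall_poissonBlockSum_le n hl
  ⟨_, Set.forall_mem_range.2 hm⟩

theorem poissonBlockSum_le_poissonBlockSup (hl : 0 < l) (m : ℕ) :
    poissonBlockSum n l m ≤ poissonBlockSup n l :=
  le_ciSup (bddAbove_range_poissonBlockSum n hl) m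

theorem exists_poissonBlockSum_eq_poissonBlockSup (n : ℕ) (hl : 0 < l) :
    ∃ m, poissonBlockSum n l m = poissonBlockSup n l :=
  let ⟨m, hm⟩ := exists_forall_poissonBlockSum_le n hl
  ⟨m, le_antisymm (poissonBlockSum_le_poissonBlockSup hl m) (ciSup_le hm)⟩

theorem sum_Icc_poissonProb_sub_le_poissonBlockSup (hl : 0 < l) (m j : ℕ) :
    ∑ k ∈ Icc (max m j) (m + n), poissonProb l (k - j) ≤ poissonBlockSup n l := by
  have himage : ∑ k ∈ Icc (max m j) (m + n), poissonProb l (k - j)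
      = ∑ i ∈ (Icc (max m j) (m + n)).image (· - j), poissonProb l i := by
    refine (sum_image fun x hx y hy hxy => ?_).symm
    simp only [coe_Icc, Set.mem_Icc] at hx hy hxy
    omega
  rw [himage]
  -- with truncated subtraction, `k - j` stays in the block starting at `m - j` also when `j > m`
  refine le_trans ?_ (poissonBlockSum_le_poissonBlockSup hl (m - j))
  refine sum_le_sum_of_subset_of_nonneg (fun i hi => ?_) fun i _ _ => poissonProb_nonneg hl.le i
  simp only [mem_image, mem_Icc] at hi ⊢
  omega

theorem poissonBlockSum_add_le {a b : ℝ} (ha : 0 < a) (hb : 0 ≤ b) (m : ℕ) :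
    poissonBlockSum n (a + b) m
      ≤ poissonBlockSup n a * ∑ j ∈ range (m + n + 1), poissonProb b j := by
  calc poissonBlockSum n (a + b) m
      = ∑ j ∈ range (m + n + 1), poissonProb b j
          * ∑ k ∈ Icc (max m j) (m + n), poissonProb a (k - j) := by
        simp only [poissonBlockSum, poissonProb_add, mul_sum]
        exact sum_comm' fun k j => by simp only [mem_Icc, mem_range]; omega
    _ ≤ ∑ j ∈ range (m + n + 1), poissonProb b j * poissonBlockSup n a :=
        sum_le_sum fun j _ => mul_le_mul_of_nonneg_left
          (sum_Icc_poissonProb_sub_le_poissonBlockSup ha m j) (poissonProb_nonneg hb j)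
    _ = poissonBlockSup n a * ∑ j ∈ range (m + n + 1), poissonProb b j := by
        rw [← sum_mul, mul_comm]

theorem poissonBlockSum_add_lt_poissonBlockSup {a b : ℝ} (ha : 0 < a) (hb : 0 < b) (m : ℕ) :
    poissonBlockSum n (a + b) m < poissonBlockSup n a := by
  have hsup : 0 < poissonBlockSup n a :=
    (poissonBlockSum_pos ha 0).trans_le (poissonBlockSum_le_poissonBlockSup ha 0)
  calc poissonBlockSum n (a + b) m
      ≤ poissonBlockSup n a * ∑ j ∈ range (m + n + 1), poissonProb b j :=
        poissonBlockSum_add_le ha hb.le m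
    _ < poissonBlockSup n a * 1 :=
        mul_lt_mul_of_pos_left (sum_range_poissonProb_lt_one hb _) hsup
    _ = poissonBlockSup n a := mul_one _

end PoissonBlock

/-- For every fixed `n ≥ 0`, the function
`S_n(λ) = sup_{m ≥ 0} ∑_{k=m}^{m+n} λ^k e^{-λ}/k!` (the sum of the `n+1` largest Poisson
probabilities) is strictly decreasing in `λ` on `(0, ∞)`. -/
theorem poisson_top_block_sum_strictAntiOn (n : ℕ) :
    StrictAntiOn (fun l : ℝ =>
      ⨆ m : ℕ, ∑ k ∈ Finset.Icc m (m + n), l ^ k * Real.exp (-l) / (Nat.factorial k : ℝ))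
      (Set.Ioi (0 : ℝ)) := by
  intro a ha l hl hal
  change poissonBlockSup n l < poissonBlockSup n a
  obtain ⟨m, hm⟩ := exists_poissonBlockSum_eq_poissonBlockSup n (Set.mem_Ioi.1 hl)
  rw [← hm, ← add_sub_cancel a l]
  exact poissonBlockSum_add_lt_poissonBlockSup ha (sub_pos.2 hal) m
end

section
/- For every λ > 0 and every α > 1, the inequality ∑_{k=1}^∞ λ^{αk−1} · k^{1−α} / ((k−1)!)^α ≤ ∑_{k=0}^∞ λ^{αk} / (k!)^α holds. -/
/-!
Write `x k = l ^ k / k!`. The `k`-th term on the left is `x k * x (k + 1) ^ (α - 1)` and the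
`k`-th term on the right is `x k ^ α`. Young's inequality with exponents `α` and `α / (α - 1)`
bounds the former by `x k ^ α / α + (1 - 1 / α) * x (k + 1) ^ α`, and summing over `k`, the
shifted series `∑ x (k + 1) ^ α` is at most `∑ x k ^ α`.
-/

open Nat Real

theorem Summable.rpow_of_one_le {x : ℕ → ℝ} (hx : ∀ k, 0 ≤ x k) (hs : Summable x) {α : ℝ}
    (hα : 1 ≤ α) : Summable fun k => x k ^ α := by
  refine .of_norm_bounded_eventually_nat hs ?_
  filter_upwards [hs.tendsto_atTop_zero.eventually_le_const zero_lt_one] with k hk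
  rw [norm_of_nonneg (rpow_nonneg (hx k) α)]
  exact rpow_le_self_of_le_one (hx k) hk hα

theorem Real.mul_rpow_sub_one_le {a b α : ℝ} (ha : 0 ≤ a) (hb : 0 ≤ b) (hα : 1 < α) :
    a * b ^ (α - 1) ≤ a ^ α / α + (α - 1) / α * b ^ α := by
  have hconj : α.HolderConjugate (α / (α - 1)) := .conjExponent hα
  have hb' : (b ^ (α - 1)) ^ (α / (α - 1)) = b ^ α := by
    rw [← rpow_mul hb, mul_div_cancel₀ _ (sub_ne_zero.2 hα.ne')]
  have := young_inequality_of_nonneg ha (rpow_nonneg hb (α - 1)) hconj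
  rw [hb', div_div_eq_mul_div] at this
  exact this.trans_eq (by ring)

theorem tsum_mul_rpow_succ_sub_one_le {x : ℕ → ℝ} (hx : ∀ k, 0 ≤ x k) {α : ℝ} (hα : 1 < α)
    (hs : Summable fun k => x k ^ α) :
    ∑' k, x k * x (k + 1) ^ (α - 1) ≤ ∑' k, x k ^ α := by
  have hyoung k : x k * x (k + 1) ^ (α - 1) ≤ x k ^ α / α + (α - 1) / α * x (k + 1) ^ α :=
    mul_rpow_sub_one_le (hx k) (hx (k + 1)) hα
  have hs' : Summable fun k => x (k + 1) ^ α := (summable_nat_add_iff 1).2 hs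
  have hbound : Summable fun k => x k ^ α / α + (α - 1) / α * x (k + 1) ^ α :=
    (hs.div_const α).add (hs'.mul_left _)
  have hshift : ∑' k, x (k + 1) ^ α ≤ ∑' k, x k ^ α := by
    rw [hs.tsum_eq_zero_add]
    linarith [rpow_nonneg (hx 0) α]
  calc ∑' k, x k * x (k + 1) ^ (α - 1)
      ≤ ∑' k, (x k ^ α / α + (α - 1) / α * x (k + 1) ^ α) :=
        (hbound.of_nonneg_of_le (fun k => mul_nonneg (hx k) (rpow_nonneg (hx _) _))
          hyoung).tsum_le_tsum hyoung hbound
    _ = (∑' k, x k ^ α) / α + (α - 1) / α * ∑' k, x (k + 1) ^ α := by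
        rw [(hs.div_const α).tsum_add (hs'.mul_left _), tsum_div_const, tsum_mul_left]
    _ ≤ (∑' k, x k ^ α) / α + (α - 1) / α * ∑' k, x k ^ α := by
        have : 0 ≤ (α - 1) / α := div_nonneg (by linarith) (by linarith)
        gcongr
    _ = ∑' k, x k ^ α := by field_simp; ring

theorem Real.pow_div_factorial_rpow {l : ℝ} (hl : 0 ≤ l) (α : ℝ) (k : ℕ) :
    (l ^ k / k ! : ℝ) ^ α = l ^ (α * k) / (k ! : ℝ) ^ α := by
  rw [div_rpow (pow_nonneg hl k) (by positivity), ← rpow_natCast, ← rpow_mul hl, mul_comm]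

theorem Real.pow_div_factorial_mul_succ_rpow {l : ℝ} (hl : 0 < l) (α : ℝ) (k : ℕ) :
    (l ^ k / k ! : ℝ) * (l ^ (k + 1) / (k + 1)! : ℝ) ^ (α - 1)
      = l ^ (α * (k + 1) - 1) * ((k : ℝ) + 1) ^ (1 - α) / (k ! : ℝ) ^ α := by
  have hx : 0 < (l ^ k / k ! : ℝ) := by positivity
  have hsucc : (l ^ (k + 1) / (k + 1)! : ℝ) = l ^ k / k ! * (l / (k + 1)) := by
    push_cast [Nat.factorial_succ]; field_simp; ring
  rw [hsucc, mul_rpow hx.le (by positivity), ← mul_assoc, mul_comm (l ^ k / k ! : ℝ),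
    ← rpow_add_one hx.ne', sub_add_cancel, pow_div_factorial_rpow hl.le,
    div_rpow hl.le (by positivity), div_eq_mul_inv (l ^ (α - 1)), ← rpow_neg (by positivity),
    neg_sub, show α * (k + 1) - 1 = α * k + (α - 1) by ring, rpow_add hl]
  ring

/-- For every `λ > 0` and `α > 1`,
`∑_{k=1}^∞ λ^{αk−1} k^{1−α}/((k−1)!)^α ≤ ∑_{k=0}^∞ λ^{αk}/(k!)^α`
(the left-hand series is re-indexed by `k ↦ k+1`). -/
theorem poisson_byproduct_inequality_one_lt_alpha (l : ℝ) (hl : 0 < l)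
    (α : ℝ) (hα : 1 < α) :
    (∑' k : ℕ, l ^ (α * ((k : ℝ) + 1) - 1) * ((k : ℝ) + 1) ^ (1 - α)
        / (Nat.factorial k : ℝ) ^ α)
      ≤ ∑' k : ℕ, l ^ (α * (k : ℝ)) / (Nat.factorial k : ℝ) ^ α := by
  have hx k : 0 ≤ l ^ k / k ! := by positivity
  have hs := (Real.summable_pow_div_factorial l).rpow_of_one_le hx hα.le
  simp_rw [← pow_div_factorial_mul_succ_rpow hl α, ← pow_div_factorial_rpow hl.le α]
  exact tsum_mul_rpow_succ_sub_one_le hx hα hs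
end
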